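/- arXiv:1509.05836 — 2 statements merged into one kernel-verified Lean document; each statement's English description precedes it below -/
import Mathlib

section
/- Let p > 1, c > 0 and k > 0 be real numbers. If c·k^(p-1) ≤ (1/p)·((p-1)/p)^(p-1), then for t_p = (p/(p-1))^p one has (c·t_p·k^(p-1) + 1)^p ≤ t_p. -/
/-! With `a = p / (p - 1)` and `t = a ^ p`, the smallness condition says exactly
`c t k^(p-1) ≤ a^p · a^(1-p) / p = a / p = 1 / (p - 1)`, so the base `c t k^(p-1) + 1`
is at most `a`, and raising to the power `p` gives `(c t k^(p-1) + 1)^p ≤ a^p = t`. -/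

lemma Real.rpow_mul_inv_rpow_sub_one {a : ℝ} (ha : 0 < a) (p : ℝ) :
    a ^ p * a⁻¹ ^ (p - 1) = a := by
  rw [Real.inv_rpow ha.le, ← Real.rpow_neg ha.le, ← Real.rpow_add ha]
  norm_num

lemma Real.conjExponent_rpow_mul_threshold {p : ℝ} (hp : 1 < p) :
    (p / (p - 1)) ^ p * (1 / p * ((p - 1) / p) ^ (p - 1)) = 1 / (p - 1) := by
  have hp1 : 0 < p - 1 := sub_pos.mpr hp
  have ha : 0 < p / (p - 1) := div_pos (by linarith) hp1
  rw [← inv_div p (p - 1), mul_left_comm, Real.rpow_mul_inv_rpow_sub_one ha]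
  field_simp

theorem barrier_fixed_point (p c k : ℝ) (hp : 1 < p) (hc : 0 < c) (hk : 0 < k)
    (h : c * k ^ (p - 1) ≤ (1 / p) * ((p - 1) / p) ^ (p - 1)) :
    (c * ((p / (p - 1)) ^ p) * k ^ (p - 1) + 1) ^ p ≤ (p / (p - 1)) ^ p := by
  have hp1 : 0 < p - 1 := sub_pos.mpr hp
  have ht : 0 < (p / (p - 1)) ^ p := Real.rpow_pos_of_pos (div_pos (by linarith) hp1) p
  have hsmall : c * (p / (p - 1)) ^ p * k ^ (p - 1) ≤ 1 / (p - 1) :=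
    calc c * (p / (p - 1)) ^ p * k ^ (p - 1) = (p / (p - 1)) ^ p * (c * k ^ (p - 1)) := by ring
      _ ≤ (p / (p - 1)) ^ p * (1 / p * ((p - 1) / p) ^ (p - 1)) := by gcongr
      _ = 1 / (p - 1) := Real.conjExponent_rpow_mul_threshold hp
  have hbase : c * (p / (p - 1)) ^ p * k ^ (p - 1) + 1 ≤ p / (p - 1) := by
    have : 1 / (p - 1) + 1 = p / (p - 1) := by field_simp; ring
    linarith
  have hk' : 0 < k ^ (p - 1) := Real.rpow_pos_of_pos hk _
  exact Real.rpow_le_rpow (by positivity) hbase (by linarith)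
end

section
/- Let p > 1 and set c_p = min{1, p-1}. Define f(s,t) = (s+t)^p - s^p and F(s,t) = (1/(p+1))·((s+t)^{p+1} - s^{p+1} - (p+1)·s^p·t) for s, t ≥ 0. Then f(s,t)·t - (2+c_p)·F(s,t) ≥ -(c_p·p/2)·s^{p-1}·t^2 for all s, t ≥ 0. -/
/-!
With `c = min 1 (p - 1)`, the gap `g(t) = f(s,t) t - (2 + c) F(s,t) + (c p / 2) s^(p-1) t^2`
satisfies `g(0) = g'(0) = 0` and
`g''(t) = p ((p - 1) (s + t)^(p-2) t - c ((s + t)^(p-1) - s^(p-1)))`.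
Convexity of `x ↦ x^(p-1)` for `p ≥ 2`, and monotonicity of `x ↦ x^(p-2)` for `p ≤ 2`, give
`(s + t)^(p-1) - s^(p-1) ≤ max (p - 1) 1 · (s + t)^(p-2) t`, and `c · max (p - 1) 1 = p - 1`,
so `g'' ≥ 0` and hence `g ≥ 0` on `[0, ∞)`.
-/

open Real Set

lemma nonneg_of_hasDerivAt_nonneg {g g' : ℝ → ℝ} (hg : Continuous g)
    (hg' : ∀ x > 0, HasDerivAt g (g' x) x) (hg'_nonneg : ∀ x > 0, 0 ≤ g' x) (hg0 : g 0 = 0)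
    {t : ℝ} (ht : 0 ≤ t) : 0 ≤ g t := by
  have hmono : MonotoneOn g (Ici 0) := by
    refine monotoneOn_of_hasDerivWithinAt_nonneg (convex_Ici 0) hg.continuousOn
      (fun x hx => (hg' x ?_).hasDerivWithinAt) (fun x hx => hg'_nonneg x ?_) <;>
    simpa using hx
  simpa [hg0] using hmono self_mem_Ici ht ht

lemma rpow_sub_rpow_le_of_one_le {q a b : ℝ} (hq : 1 ≤ q) (hb : 0 ≤ b) (ha : 0 < a) :
    a ^ q - b ^ q ≤ q * a ^ (q - 1) * (a - b) := by
  have hbern := one_add_mul_self_le_rpow_one_add (s := b / a - 1)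
    (by linarith [div_nonneg hb ha.le]) hq
  rw [add_sub_cancel, div_rpow hb ha.le, le_div_iff₀ (rpow_pos_of_pos ha q)] at hbern
  have hsplit : a ^ q = a ^ (q - 1) * a := by
    rw [rpow_sub_one ha.ne', div_mul_cancel₀ _ ha.ne']
  have : (1 + q * (b / a - 1)) * a ^ q = a ^ q - q * a ^ (q - 1) * (a - b) := by
    rw [hsplit]; field_simp; ring
  linarith

lemma rpow_sub_one_mul_le_rpow {q a b : ℝ} (hq : q ≤ 1) (hb : 0 ≤ b) (hba : b ≤ a) :
    a ^ (q - 1) * b ≤ b ^ q := by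
  rcases hb.eq_or_lt with rfl | hb
  · simpa using rpow_nonneg le_rfl q
  calc a ^ (q - 1) * b ≤ b ^ (q - 1) * b :=
        mul_le_mul_of_nonneg_right (rpow_le_rpow_of_nonpos hb hba (by linarith)) hb.le
    _ = b ^ q := by rw [rpow_sub_one hb.ne', div_mul_cancel₀ _ hb.ne']

lemma rpow_sub_rpow_le_max_mul {q a b : ℝ} (hb : 0 ≤ b) (hba : b ≤ a) :
    a ^ q - b ^ q ≤ max q 1 * a ^ (q - 1) * (a - b) := by
  rcases (hb.trans hba).eq_or_lt with rfl | ha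
  · simp [le_antisymm hba hb]
  rcases le_total 1 q with hq | hq
  · rw [max_eq_left hq]
    exact rpow_sub_rpow_le_of_one_le hq hb ha
  · have hsplit : a ^ (q - 1) * a = a ^ q := by
      rw [rpow_sub_one ha.ne', div_mul_cancel₀ _ ha.ne']
    rw [max_eq_right hq]
    linear_combination rpow_sub_one_mul_le_rpow hq hb hba - hsplit

lemma hasDerivAt_const_add_rpow {s q x : ℝ} (h : s + x ≠ 0 ∨ 1 ≤ q) :
    HasDerivAt (fun t => (s + t) ^ q) (q * (s + x) ^ (q - 1)) x := by
  simpa using ((hasDerivAt_id x).const_add s).rpow_const h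

lemma min_mul_rpow_sub_rpow_le {p s t : ℝ} (hp : 1 ≤ p) (hs : 0 ≤ s) (ht : 0 ≤ t) :
    min 1 (p - 1) * ((s + t) ^ (p - 1) - s ^ (p - 1)) ≤ (p - 1) * (s + t) ^ (p - 2) * t := by
  have hbound := rpow_sub_rpow_le_max_mul (q := p - 1) hs (le_add_of_nonneg_right ht)
  rw [show p - 1 - 1 = p - 2 by ring, add_sub_cancel_left, max_comm] at hbound
  have hc : 0 ≤ min 1 (p - 1) := le_min zero_le_one (by linarith)
  linear_combination mul_le_mul_of_nonneg_left hbound hc +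
    (s + t) ^ (p - 2) * t * min_mul_max 1 (p - 1)

namespace NiSerrin

variable (p c s : ℝ)

noncomputable def f (t : ℝ) : ℝ := (s + t) ^ p - s ^ p

noncomputable def F (t : ℝ) : ℝ :=
  (1 / (p + 1)) * ((s + t) ^ (p + 1) - s ^ (p + 1) - (p + 1) * s ^ p * t)

noncomputable def gap (t : ℝ) : ℝ :=
  f p s t * t - (2 + c) * F p s t + c * p / 2 * s ^ (p - 1) * t ^ 2

noncomputable def gapDeriv (t : ℝ) : ℝ :=
  p * (s + t) ^ (p - 1) * t - (1 + c) * f p s t + c * p * s ^ (p - 1) * t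

variable {p c s}

lemma hasDerivAt_f (hp : 1 ≤ p) (x : ℝ) : HasDerivAt (f p s) (p * (s + x) ^ (p - 1)) x :=
  (hasDerivAt_const_add_rpow (Or.inr hp)).sub_const _

lemma hasDerivAt_F (hp : 0 ≤ p) (x : ℝ) : HasDerivAt (F p s) (f p s x) x := by
  have hpow := hasDerivAt_const_add_rpow (s := s) (x := x) (Or.inr (by linarith : 1 ≤ p + 1))
  have h := ((hpow.sub_const (s ^ (p + 1))).sub
    ((hasDerivAt_id x).const_mul ((p + 1) * s ^ p))).const_mul (1 / (p + 1))
  refine h.congr_deriv ?_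
  rw [add_sub_cancel_right]
  unfold f
  field_simp

lemma hasDerivAt_gap (hp : 1 ≤ p) (x : ℝ) : HasDerivAt (gap p c s) (gapDeriv p c s x) x := by
  have h := (((hasDerivAt_f (s := s) hp x).mul (hasDerivAt_id x)).sub
    ((hasDerivAt_F (s := s) (by linarith) x).const_mul (2 + c))).add
    ((hasDerivAt_pow 2 x).const_mul (c * p / 2 * s ^ (p - 1)))
  refine h.congr_deriv ?_
  simp only [gapDeriv, id]
  ring

lemma hasDerivAt_gapDeriv (hp : 1 ≤ p) {x : ℝ} (hx : s + x ≠ 0) :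
    HasDerivAt (gapDeriv p c s)
      (p * ((p - 1) * (s + x) ^ (p - 2) * x - c * ((s + x) ^ (p - 1) - s ^ (p - 1)))) x := by
  have hpow := (hasDerivAt_const_add_rpow (q := p - 1) (Or.inl hx)).const_mul p
  have h := ((hpow.mul (hasDerivAt_id x)).sub ((hasDerivAt_f (s := s) hp x).const_mul (1 + c))).add
    ((hasDerivAt_id x).const_mul (c * p * s ^ (p - 1)))
  refine h.congr_deriv ?_
  rw [show p - 1 - 1 = p - 2 by ring]
  simp only [id]
  ring

lemma continuous_gapDeriv (hp : 1 ≤ p) : Continuous (gapDeriv p c s) := by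
  have hrpow {q : ℝ} (hq : 0 ≤ q) : Continuous fun t => (s + t) ^ q :=
    (continuous_const_add s).rpow_const fun _ => Or.inr hq
  have := hrpow (q := p - 1) (by linarith)
  have := hrpow (q := p) (by linarith)
  unfold gapDeriv f
  fun_prop

lemma gapDeriv_nonneg (hp : 1 ≤ p) (hs : 0 ≤ s) {t : ℝ} (ht : 0 ≤ t) :
    0 ≤ gapDeriv p (min 1 (p - 1)) s t :=
  nonneg_of_hasDerivAt_nonneg (continuous_gapDeriv hp)
    (fun _ hx => hasDerivAt_gapDeriv hp (by positivity))
    (fun _ hx => mul_nonneg (by linarith) (sub_nonneg.2 (min_mul_rpow_sub_rpow_le hp hs hx.le)))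
    (by simp [gapDeriv, f]) ht

lemma gap_nonneg (hp : 1 ≤ p) (hs : 0 ≤ s) {t : ℝ} (ht : 0 ≤ t) :
    0 ≤ gap p (min 1 (p - 1)) s t :=
  nonneg_of_hasDerivAt_nonneg
    (continuous_iff_continuousAt.2 fun x => (hasDerivAt_gap hp x).continuousAt)
    (fun x _ => hasDerivAt_gap hp x) (fun _ hx => gapDeriv_nonneg hp hs hx.le)
    (by simp [gap, f, F]) ht

end NiSerrin

theorem ni_serrin_inequality (p : ℝ) (hp : 1 < p) (s t : ℝ) (hs : 0 ≤ s) (ht : 0 ≤ t) :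
    ((s + t) ^ p - s ^ p) * t -
      (2 + min 1 (p - 1)) *
        ((1 / (p + 1)) * ((s + t) ^ (p + 1) - s ^ (p + 1) - (p + 1) * s ^ p * t)) ≥
      -(min 1 (p - 1) * p / 2) * s ^ (p - 1) * t ^ 2 := by
  have h := NiSerrin.gap_nonneg hp.le hs ht
  simp only [NiSerrin.gap, NiSerrin.f, NiSerrin.F] at h
  linarith
end
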